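/- For all sufficiently large natural numbers x, the product of all prime numbers p ≤ x is at least (x/e)^(x/(3·ln x)); that is, there exists x₀ such that for all natural numbers x ≥ x₀, ∏_{p prime, p ≤ x} p ≥ (x/e)^(x/(3·ln x)) as real numbers. -/

import Mathlib

/-!
The logarithm of the product is Chebyshev's `θ x`, and Chebyshev's bound
`θ n ≥ n log 2 - log (n + 1) - 2 √n log n` gives `θ n ≥ c n` for large `n` whenever
`c < log 2`; take `c = 1/3`. On the other side `(x/e)^(x/(3 log x)) ≤ x^(x/(3 log x)) = e^(x/3)`.
-/

open Real Filter Asymptotics Chebyshev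

lemma isLittleO_sqrt_mul_log_id : (fun x => √x * log x) =o[atTop] id := by
  refine ((isBigO_refl sqrt atTop).mul_isLittleO (isLittleO_log_rpow_atTop one_half_pos)).congr'
    EventuallyEq.rfl ?_
  filter_upwards [eventually_ge_atTop 0] with x hx
  rw [sqrt_eq_rpow, ← rpow_add' hx (by norm_num)]
  norm_num

lemma isLittleO_log_add_one_id : (fun x => log (x + 1)) =o[atTop] id :=
  (isLittleO_log_id_atTop.comp_tendsto (tendsto_atTop_add_const_right _ 1 tendsto_id)).trans_isBigO
    ((isBigO_refl id atTop).add (isLittleO_const_id_atTop 1).isBigO)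

lemma rpow_div_log_le_exp {x y : ℝ} (hx : 1 < x) (hy : 0 ≤ y) :
    (x / exp 1) ^ (y / log x) ≤ exp y := by
  have hlog : 0 < log x := log_pos hx
  calc (x / exp 1) ^ (y / log x) ≤ x ^ (y / log x) := by
        gcongr
        exact div_le_self (by positivity) (one_le_exp zero_le_one)
    _ = exp y := by rw [rpow_def_of_pos (by linarith), mul_div_cancel₀ _ hlog.ne']

theorem eventually_mul_le_theta {c : ℝ} (hc : c < log 2) : ∀ᶠ n : ℕ in atTop, c * n ≤ θ n := by
  have hsmall := isLittleO_log_add_one_id.add (isLittleO_sqrt_mul_log_id.const_mul_left 2)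
  filter_upwards [tendsto_natCast_atTop_atTop.eventually (hsmall.bound (sub_pos.2 hc))] with n hn
  simp only [Real.norm_eq_abs, id, Nat.abs_cast] at hn
  linarith [theta_ge n, le_abs_self (log (n + 1) + 2 * (√n * log n))]

lemma exp_theta_natCast (n : ℕ) : exp (θ n) = primorial n := by
  rw [theta_eq_log_primorial, Nat.floor_natCast, exp_log (mod_cast primorial_pos n)]

/-- For all sufficiently large natural numbers `x`, the product of all primes `p ≤ x`
is at least `(x/e)^(x/(3·ln x))`. -/
theorem primorial_lower_bound :
    ∃ x₀ : ℕ, ∀ x : ℕ, x ≥ x₀ →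
      (∏ p ∈ (Finset.range (x + 1)).filter (fun p => p.Prime), (p : ℝ))
        ≥ ((x : ℝ) / Real.exp 1) ^ ((x : ℝ) / (3 * Real.log x)) := by
  have third_lt_log_two : (1 / 3 : ℝ) < log 2 := by linarith [log_two_gt_d9]
  obtain ⟨x₀, hx₀⟩ := eventually_atTop.1
    ((eventually_mul_le_theta third_lt_log_two).and (eventually_gt_atTop 1))
  refine ⟨x₀, fun x hx => ?_⟩
  obtain ⟨hθ, hx1⟩ := hx₀ x hx
  calc ((x : ℝ) / exp 1) ^ ((x : ℝ) / (3 * log x))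
      = ((x : ℝ) / exp 1) ^ ((x / 3 : ℝ) / log x) := by rw [div_mul_eq_div_div]
    _ ≤ exp (x / 3) := rpow_div_log_le_exp (mod_cast hx1) (by positivity)
    _ ≤ exp (θ x) := exp_le_exp.2 (by linarith)
    _ = _ := by rw [exp_theta_natCast, primorial]; push_cast; rfl
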